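/- arXiv:2504.07175 — 4 statements merged into one kernel-verified Lean document; each statement's English description precedes it below -/
import Mathlib

section
/- Suppose the failure probabilities are equalized across goods: P_i(n_i*) = y > 0 for all i. Then the heterogeneous equilibrium condition (n_{ik}·P_i(n_i*)/T_i^{(k)} constant over i for each type k) together with Σ_i n_{ik} = N_u^{(k)} and Σ_k n_{ik} = n_i* holds for some nonnegative n_{ik} only if the tolerance vectors satisfy Σ_k N_u^{(k)} · T_i^{(k)}/(Σ_j T_j^{(k)}) = n_i* for every good i. -/
open Finset

/-- 'Only if' direction of Theorem 1: if the failure probabilities are equalised at the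
target distribution `nstar` and some nonnegative subpopulation assignment realises a
heterogeneous equilibrium with subpopulation sizes `Nu k` and occupancies `nstar i`,
then the tolerance vectors must satisfy `∑ k, Nu k * T i k / ∑ j T j k = nstar i`. -/
theorem equalised_quality_forces_tolerances (Ng Nt : ℕ)
    (P : Fin Ng → ℝ → ℝ) (nstar : Fin Ng → ℝ) (hnstar : ∀ i, 0 < nstar i)
    (Nu : Fin Nt → ℝ) (hNu : ∀ k, 0 < Nu k)
    (T : Fin Ng → Fin Nt → ℝ) (hT : ∀ i k, 0 < T i k)
    (y : ℝ) (hy : 0 < y) (heq : ∀ i, P i (nstar i) = y)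
    (hex : ∃ n : Fin Ng → Fin Nt → ℝ,
      (∀ i k, 0 ≤ n i k) ∧
      (∀ k, ∃ c : ℝ, ∀ i, n i k * P i (nstar i) / T i k = c) ∧
      (∀ k, ∑ i, n i k = Nu k) ∧
      (∀ i, ∑ k, n i k = nstar i)) :
    ∀ i, ∑ k, Nu k * T i k / (∑ j, T j k) = nstar i := by
  obtain ⟨n, _, hc, hrow, hcol⟩ := hex
  -- For each k obtain the constant c k and show n i k = c k * T i k / y
  have key : ∀ i k, n i k = Nu k * T i k / (∑ j, T j k) := by
    intro i k
    obtain ⟨c, hck⟩ := hc k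
    have hn : ∀ i, n i k = c * T i k / y := by
      intro i
      have h := hck i
      rw [heq i] at h
      have hTne : T i k ≠ 0 := (hT i k).ne'
      have hyne : y ≠ 0 := hy.ne'
      field_simp at h ⊢
      linarith
    have hsumT : (0:ℝ) < ∑ j, T j k := by
      have : ∀ j ∈ (univ : Finset (Fin Ng)), 0 < T j k := fun j _ => hT j k
      rcases Nat.eq_zero_or_pos Ng with h0 | hpos
      · exfalso; exact absurd (h0 ▸ i).isLt (by simp [h0])
      · exact Finset.sum_pos this ⟨⟨0, hpos⟩, mem_univ _⟩
    have hsum : c * (∑ j, T j k) / y = Nu k := by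
      rw [← hrow k]
      rw [Finset.sum_congr rfl (fun j _ => hn j)]
      rw [← Finset.sum_div, ← Finset.mul_sum]
    have hcval : c = Nu k * y / (∑ j, T j k) := by
      field_simp at hsum ⊢
      linarith
    rw [hn i, hcval]
    field_simp
  intro i
  rw [← hcol i]
  exact Finset.sum_congr rfl (fun k _ => (key i k).symm)
end

section
/- If γ < γ^c = (N_u − N_g·n_{min}*)/N_u, then for any nonnegative tolerance fractions f_i = T_i^{(2)}/(Σ_j T_j^{(2)}) summing to 1, the occupancy of the minimizing good satisfies (1−γ)·N_u/N_g + γ·N_u·f_{i_min} > n_{min}*, so the equalized-quality distribution cannot be attained. -/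
open Finset

/-- Below the critical selective fraction, the minimising good is necessarily
overused: for any tolerance fractions, its occupancy strictly exceeds `nmin`,
so the equalised-quality distribution cannot be attained. -/
theorem hybrid_below_critical_overuse (Ng : ℕ) (hNg : 2 ≤ Ng)
    (Nu : ℝ) (hNu : 0 < Nu)
    (nstar : Fin Ng → ℝ) (hnstar : ∀ i, 0 ≤ nstar i) (hsum : ∑ i, nstar i = Nu)
    (imin : Fin Ng) (hmin : ∀ i, nstar imin ≤ nstar i)
    (gamma : ℝ) (hγ0 : 0 ≤ gamma) (hγ1 : gamma < 1)
    (hγc : gamma < (Nu - (Ng : ℝ) * nstar imin) / Nu)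
    (f : Fin Ng → ℝ) (hf : ∀ i, 0 ≤ f i) (hfsum : ∑ i, f i = 1) :
    (1 - gamma) * Nu / (Ng : ℝ) + gamma * Nu * f imin > nstar imin := by
  have hNg' : (0:ℝ) < (Ng : ℝ) := by positivity
  have h1 : gamma * Nu < Nu - (Ng : ℝ) * nstar imin := by
    exact (lt_div_iff₀ hNu).mp hγc
  have h2 : 0 ≤ gamma * Nu * f imin := mul_nonneg (mul_nonneg hγ0 hNu.le) (hf imin)
  have h3 : (Ng : ℝ) * nstar imin < (1 - gamma) * Nu := by linarith
  have h4 : nstar imin < (1 - gamma) * Nu / (Ng : ℝ) := by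
    rw [lt_div_iff₀ hNg']; linarith [h3, mul_comm (Ng:ℝ) (nstar imin)]
  linarith
end

section
/- If P_1 and P_2 are continuous, strictly increasing, positive failure probability functions and N > 0, then there exists a unique pair (n_1, n_2) with n_1, n_2 > 0, n_1 + n_2 = N, and n_1·P_1(n_1) = n_2·P_2(n_2). -/
/-- If `P` is strictly increasing and positive on `[0,∞)`, then `x ↦ x * P x`
is strictly increasing on `[0,∞)`. -/
lemma aux_mul_strictMonoOn (P : ℝ → ℝ) (hm : StrictMonoOn P (Set.Ici (0 : ℝ)))
    (hp : ∀ x ≥ (0 : ℝ), 0 < P x) :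
    StrictMonoOn (fun x => x * P x) (Set.Ici (0 : ℝ)) := by
  intro x hx y hy hxy
  have hx0 : (0:ℝ) ≤ x := hx
  have hy0 : (0:ℝ) ≤ y := hy
  have h1 : P x < P y := hm hx hy hxy
  have h2 : 0 < P x := hp x hx0
  have h3 : 0 < P y := hp y hy0
  simp only
  nlinarith

/-- Existence and uniqueness of the two-good WSLS equilibrium: for continuous,
strictly increasing, positive failure probability functions and total population
`N > 0`, there is a unique pair `(n1, n2)` of positive occupancies summing to `N`
with equalised rates `n1 * P1 n1 = n2 * P2 n2`. -/
theorem wsls_two_good_equilibrium_existsUnique (P1 P2 : ℝ → ℝ)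
    (hc1 : ContinuousOn P1 (Set.Ici (0 : ℝ))) (hc2 : ContinuousOn P2 (Set.Ici (0 : ℝ)))
    (hm1 : StrictMonoOn P1 (Set.Ici (0 : ℝ))) (hm2 : StrictMonoOn P2 (Set.Ici (0 : ℝ)))
    (hp1 : ∀ x ≥ (0 : ℝ), 0 < P1 x) (hp2 : ∀ x ≥ (0 : ℝ), 0 < P2 x)
    (N : ℝ) (hN : 0 < N) :
    ∃! p : ℝ × ℝ, 0 < p.1 ∧ 0 < p.2 ∧ p.1 + p.2 = N ∧
      p.1 * P1 p.1 = p.2 * P2 p.2 := by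
  set g : ℝ → ℝ := fun x => x * P1 x - (N - x) * P2 (N - x) with hg
  have hsub : Set.Icc (0:ℝ) N ⊆ Set.Ici (0:ℝ) := fun z hz => hz.1
  have hmaps : ∀ x ∈ Set.Icc (0:ℝ) N, N - x ∈ Set.Ici (0:ℝ) := by
    intro x hx; simp only [Set.mem_Ici]; linarith [hx.2]
  -- g is strictly monotone on [0, N]
  have hmono : StrictMonoOn g (Set.Icc 0 N) := by
    intro x hx y hy hxy
    have h1 : x * P1 x < y * P1 y :=
      aux_mul_strictMonoOn P1 hm1 hp1 hx.1 hy.1 hxy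
    have h2 : (N - y) * P2 (N - y) < (N - x) * P2 (N - x) :=
      aux_mul_strictMonoOn P2 hm2 hp2 (hmaps y hy) (hmaps x hx) (by linarith)
    simp only [hg]
    linarith
  -- g is continuous on [0, N]
  have hcont : ContinuousOn g (Set.Icc 0 N) := by
    apply ContinuousOn.sub
    · exact continuousOn_id.mul ((hc1.mono hsub))
    · have hNx : ContinuousOn (fun x : ℝ => N - x) (Set.Icc 0 N) :=
        (continuousOn_const.sub continuousOn_id)
      exact hNx.mul (hc2.comp hNx hmaps)
  have hg0 : g 0 < 0 := by
    have := hp2 N (le_of_lt hN)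
    show 0 * P1 0 - (N - 0) * P2 (N - 0) < 0
    rw [zero_mul, sub_zero]
    nlinarith
  have hgN : 0 < g N := by
    have := hp1 N (le_of_lt hN)
    show 0 < N * P1 N - (N - N) * P2 (N - N)
    rw [sub_self, zero_mul, sub_zero]
    nlinarith
  have hmem : (0:ℝ) ∈ Set.Icc (g 0) (g N) := ⟨le_of_lt hg0, le_of_lt hgN⟩
  obtain ⟨x, hxmem, hx0⟩ := intermediate_value_Icc (le_of_lt hN) hcont hmem
  have hxpos : 0 < x := by
    rcases lt_or_eq_of_le hxmem.1 with h | h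
    · exact h
    · exfalso; rw [← h] at hx0; linarith
  have hxlt : x < N := by
    rcases lt_or_eq_of_le hxmem.2 with h | h
    · exact h
    · exfalso; rw [h] at hx0; linarith
  refine ⟨(x, N - x), ⟨hxpos, by simpa using hxlt, by ring, by
    simp only
    linarith [hx0.symm ▸ (rfl : g x = g x), (show x * P1 x - (N - x) * P2 (N - x) = 0 from hx0)]⟩, ?_⟩
  rintro ⟨a, b⟩ ⟨ha, hb, hab, heq⟩
  simp only at ha hb hab heq
  have hbN : b = N - a := by linarith
  have haI : a ∈ Set.Icc (0:ℝ) N := ⟨le_of_lt ha, by linarith⟩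
  have hga : g a = 0 := by
    simp only [hg, ← hbN]
    linarith
  have : a = x := by
    apply hmono.injOn haI hxmem
    rw [hga, hx0]
  simp [Prod.ext_iff, this, hbN]
end

section
/- At the single-type WSLS equilibrium with two goods, let P be strictly increasing and suppose P_1(n) = P(a·n) and P_2(n) = P(n) with 0 < a < 1 (good 1 has higher capacity); then at the WSLS equilibrium n_1·P(a·n_1) = n_2·P(n_2), good 1 holds more users (n_1 > n_2) and exhibits lower failure probability (P(a·n_1) < P(n_2)). -/
/-- If good 1 has higher capacity (its failure probability is `P (a * n)` with
`0 < a < 1` while good 2 has `P n`), then at the WSLS equilibrium good 1 holds more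
users and exhibits a lower failure probability. -/
theorem wsls_higher_capacity_more_users (P : ℝ → ℝ)
    (hc : ContinuousOn P (Set.Ioi (0 : ℝ)))
    (hmono : StrictMonoOn P (Set.Ioi (0 : ℝ)))
    (hpos : ∀ x > (0 : ℝ), 0 < P x)
    (a : ℝ) (ha0 : 0 < a) (ha1 : a < 1)
    (n1 n2 : ℝ) (h1 : 0 < n1) (h2 : 0 < n2)
    (heq : n1 * P (a * n1) = n2 * P n2) :
    n1 > n2 ∧ P (a * n1) < P n2 := by
  have han1 : (0:ℝ) < a * n1 := mul_pos ha0 h1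
  have hgt : n1 > n2 := by
    by_contra h
    push_neg at h
    have hlt : a * n1 < n2 := lt_of_lt_of_le (by nlinarith) h
    have hP : P (a * n1) < P n2 := hmono han1 h2 hlt
    have := hpos (a * n1) han1
    nlinarith [hpos n2 h2]
  refine ⟨hgt, ?_⟩
  have hP2 := hpos n2 h2
  have : P (a * n1) = n2 / n1 * P n2 := by field_simp; linarith [heq]
  rw [this]
  have : n2 / n1 < 1 := (div_lt_one h1).mpr hgt
  nlinarith
end
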